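/- Observers of quantum systems cannot agree to disagree: no quantum box, with arbitrary finite input sets X, Y containing {0,1} and finite output sets A, B containing {0,1}, can exhibit common certainty of disagreement. -/

import Mathlib

/-!
Let `(α, β)` be the pair at which the decreasing sequence `(αₙ, βₙ)` stabilises. On inputs
`(0, 0)` the events `a ∈ α` and `b ∈ β` then coincide almost surely, and by perfect correlation
so do `a = 1` and `b = 1` on inputs `(1, 1)`. Nonsignalling turns the defining conditions of `α₀`
and `β₀` into `P(a ∈ α, b = 1 | 0, 1) = q_A w` and `P(a = 1, b ∈ β | 1, 0) = q_B w`, where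
`w = P(α × β | 0, 0) > 0`. In a quantum box an almost sure coincidence of the events with POVM
elements `M` and `N` means `(M ⊗ 1) ρ = (1 ⊗ N) ρ`. Hence, with `M = ∑_{a ∈ α} E_{a|0}` and
`G = E_{1|1}`, the two probabilities are `tr((M G ⊗ 1) ρ)` and `tr((G M ⊗ 1) ρ)`, which are
complex conjugates of each other; being real they are equal, so `q_A = q_B`.
-/

open Finset
open scoped ComplexOrder

attribute [local instance] Classical.propDecidable

noncomputable section

/-- A bipartite box `P a b x y = P(a,b|x,y)`: nonnegative entries summing to one over
the outputs, for every pair of inputs. -/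
def IsBox {nA nB nX nY : ℕ} (P : Fin nA → Fin nB → Fin nX → Fin nY → ℝ) : Prop :=
  (∀ a b x y, 0 ≤ P a b x y) ∧ ∀ x y, ∑ a, ∑ b, P a b x y = 1

/-- A bipartite box is nonsignalling if Alice's output marginal does not depend on
Bob's input and vice versa. -/
def NonSignallingBox {nA nB nX nY : ℕ}
    (P : Fin nA → Fin nB → Fin nX → Fin nY → ℝ) : Prop :=
  (∀ a x y y', ∑ b, P a b x y = ∑ b, P a b x y') ∧
  (∀ b y x x', ∑ a, P a b x y = ∑ a, P a b x' y)

/-- A quantum box: realised by local POVMs on a shared bipartite quantum state. -/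
def IsQuantumBox {nA nB nX nY : ℕ}
    (P : Fin nA → Fin nB → Fin nX → Fin nY → ℝ) : Prop :=
  ∃ (dA dB : ℕ) (ρ : Matrix (Fin dA × Fin dB) (Fin dA × Fin dB) ℂ)
    (E : Fin nX → Fin nA → Matrix (Fin dA) (Fin dA) ℂ)
    (F : Fin nY → Fin nB → Matrix (Fin dB) (Fin dB) ℂ),
    ρ.PosSemidef ∧ ρ.trace = 1 ∧
    (∀ x a, (E x a).PosSemidef) ∧ (∀ x, ∑ a, E x a = 1) ∧
    (∀ y b, (F y b).PosSemidef) ∧ (∀ y, ∑ b, F y b = 1) ∧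
    ∀ a b x y, (P a b x y : ℂ) =
      ∑ q : Fin dA × Fin dB, ∑ q' : Fin dA × Fin dB,
        E x a q.1 q'.1 * F y b q.2 q'.2 * ρ q' q

/-- The pair of output sets `(αₙ, βₙ)` of the agreement argument for boxes:
`α₀` is the set of Alice's outputs (on input `x0`) for which she assigns conditional
probability `qA` to Bob outputting `b1` on input `y1` (similarly `β₀` for Bob), and
`α_{n+1}` (resp. `β_{n+1}`) is the subset of `αₙ` (resp. `βₙ`) at which Alice (resp.
Bob) is moreover certain, on inputs `(x0, y0)`, that Bob's (resp. Alice's) output lies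
in `βₙ` (resp. `αₙ`). -/
def ccdSets {nA nB nX nY : ℕ} (P : Fin nA → Fin nB → Fin nX → Fin nY → ℝ)
    (x0 x1 : Fin nX) (y0 y1 : Fin nY) (a1 : Fin nA) (b1 : Fin nB) (qA qB : ℝ) :
    ℕ → Finset (Fin nA) × Finset (Fin nB)
  | 0 => (univ.filter fun a => P a b1 x0 y1 / (∑ b, P a b x0 y1) = qA,
          univ.filter fun b => P a1 b x1 y0 / (∑ a, P a b x1 y0) = qB)
  | n + 1 =>
      let s := ccdSets P x0 x1 y0 y1 a1 b1 qA qB n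
      (s.1.filter fun a => (∑ b ∈ s.2, P a b x0 y0) / (∑ b, P a b x0 y0) = 1,
       s.2.filter fun b => (∑ a ∈ s.1, P a b x0 y0) / (∑ a, P a b x0 y0) = 1)

/-- A box exhibits **common certainty of disagreement** (at inputs/outputs `(0,0,0,0)`,
about the outputs of interest `(1,1)` on inputs `(1,1)`) if: the outputs on inputs
`(1,1)` are perfectly correlated, the event `(0,0,0,0)` has positive probability, and
there are `q_A ≠ q_B` in `[0,1]` with `0 ∈ αₙ` and `0 ∈ βₙ` for every `n`. -/
def HasCCD {nA nB nX nY : ℕ} (hA : 2 ≤ nA) (hB : 2 ≤ nB) (hX : 2 ≤ nX) (hY : 2 ≤ nY)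
    (P : Fin nA → Fin nB → Fin nX → Fin nY → ℝ) : Prop :=
  let a0 : Fin nA := ⟨0, by omega⟩
  let a1 : Fin nA := ⟨1, hA⟩
  let b0 : Fin nB := ⟨0, by omega⟩
  let b1 : Fin nB := ⟨1, hB⟩
  let x0 : Fin nX := ⟨0, by omega⟩
  let x1 : Fin nX := ⟨1, hX⟩
  let y0 : Fin nY := ⟨0, by omega⟩
  let y1 : Fin nY := ⟨1, hY⟩
  (∀ (a : Fin nA) (b : Fin nB), (a : ℕ) ≠ (b : ℕ) → P a b x1 y1 = 0) ∧
  0 < P a0 b0 x0 y0 ∧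
  ∃ qA qB : ℝ, qA ∈ Set.Icc (0 : ℝ) 1 ∧ qB ∈ Set.Icc (0 : ℝ) 1 ∧ qA ≠ qB ∧
    ∀ n : ℕ, a0 ∈ (ccdSets P x0 x1 y0 y1 a1 b1 qA qB n).1 ∧
             b0 ∈ (ccdSets P x0 x1 y0 y1 a1 b1 qA qB n).2

/-- A box exhibits **singular disagreement** if: the outputs on inputs `(1,1)` are
perfectly correlated, the event `(0,0,0,0)` has positive probability, and the
well-defined conditional probabilities satisfy `P(b=1|a=0,x=0,y=1) = 1` and
`P(a=1|b=0,x=1,y=0) = 0`. -/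
def HasSD {nA nB nX nY : ℕ} (hA : 2 ≤ nA) (hB : 2 ≤ nB) (hX : 2 ≤ nX) (hY : 2 ≤ nY)
    (P : Fin nA → Fin nB → Fin nX → Fin nY → ℝ) : Prop :=
  let a0 : Fin nA := ⟨0, by omega⟩
  let a1 : Fin nA := ⟨1, hA⟩
  let b0 : Fin nB := ⟨0, by omega⟩
  let b1 : Fin nB := ⟨1, hB⟩
  let x0 : Fin nX := ⟨0, by omega⟩
  let x1 : Fin nX := ⟨1, hX⟩
  let y0 : Fin nY := ⟨0, by omega⟩
  let y1 : Fin nY := ⟨1, hY⟩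
  (∀ (a : Fin nA) (b : Fin nB), (a : ℕ) ≠ (b : ℕ) → P a b x1 y1 = 0) ∧
  0 < P a0 b0 x0 y0 ∧
  (0 < ∑ b, P a0 b x0 y1 ∧ P a0 b1 x0 y1 / (∑ b, P a0 b x0 y1) = 1) ∧
  (0 < ∑ a, P a b0 x1 y0 ∧ P a1 b0 x1 y0 / (∑ a, P a b0 x1 y0) = 0)

open Matrix
open scoped Kronecker

section MatrixLemmas

variable {𝕜 k : Type*} [RCLike 𝕜] [Fintype k]

open scoped MatrixOrder in
theorem Matrix.PosSemidef.exists_trace_mul_eq {A R : Matrix k k 𝕜} (hA : A.PosSemidef)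
    (hR : R.PosSemidef) :
    ∃ a r : Matrix k k 𝕜, A = aᴴ * a ∧ R = rᴴ * r ∧
      (A * R).trace = (a * rᴴ * (a * rᴴ)ᴴ).trace := by
  obtain ⟨a, rfl⟩ := CStarAlgebra.nonneg_iff_eq_star_mul_self.mp hA.nonneg
  obtain ⟨r, rfl⟩ := CStarAlgebra.nonneg_iff_eq_star_mul_self.mp hR.nonneg
  refine ⟨a, r, rfl, rfl, ?_⟩
  simp only [star_eq_conjTranspose, conjTranspose_mul, conjTranspose_conjTranspose,
    Matrix.mul_assoc]
  rw [← trace_mul_comm]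
  simp only [Matrix.mul_assoc]

theorem Matrix.PosSemidef.trace_mul_nonneg {A R : Matrix k k 𝕜} (hA : A.PosSemidef)
    (hR : R.PosSemidef) : 0 ≤ (A * R).trace := by
  obtain ⟨a, r, -, -, h⟩ := hA.exists_trace_mul_eq hR
  exact h ▸ (posSemidef_self_mul_conjTranspose _).trace_nonneg

theorem Matrix.PosSemidef.mul_eq_zero_of_trace_mul_eq_zero {A R : Matrix k k 𝕜}
    (hA : A.PosSemidef) (hR : R.PosSemidef) (h : (A * R).trace = 0) : A * R = 0 := by
  obtain ⟨a, r, rfl, rfl, htr⟩ := hA.exists_trace_mul_eq hR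
  have har : a * rᴴ = 0 := trace_mul_conjTranspose_self_eq_zero_iff.mp (htr ▸ h)
  calc aᴴ * a * (rᴴ * r) = aᴴ * (a * rᴴ) * r := by simp only [Matrix.mul_assoc]
    _ = 0 := by rw [har, Matrix.mul_zero, Matrix.zero_mul]

end MatrixLemmas

section KroneckerLemmas

variable {α ι κ l m n p : Type*}

theorem Matrix.sum_kronecker_sum [CommSemiring α] (s : Finset ι) (t : Finset κ)
    (A : ι → Matrix l m α) (B : κ → Matrix n p α) :
    (∑ i ∈ s, A i) ⊗ₖ (∑ j ∈ t, B j) = ∑ i ∈ s, ∑ j ∈ t, A i ⊗ₖ B j := by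
  ext
  simp only [kroneckerMap_apply, Matrix.sum_apply, Finset.sum_mul, Finset.mul_sum]
  exact Finset.sum_comm

variable [Fintype m] [Fintype n] [DecidableEq m] [DecidableEq n]

theorem Matrix.kronecker_one_mul_eq_one_kronecker_mul [Semiring α]
    {A A' : Matrix m m α} {B B' : Matrix n n α} {ρ : Matrix (m × n) (m × n) α}
    (hA : A + A' = 1) (hB : B + B' = 1) (h : (A ⊗ₖ B') * ρ = 0) (h' : (A' ⊗ₖ B) * ρ = 0) :
    (A ⊗ₖ 1) * ρ = (1 ⊗ₖ B) * ρ := by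
  calc (A ⊗ₖ 1) * ρ = (A ⊗ₖ B) * ρ := by rw [← hB, kronecker_add, Matrix.add_mul, h, add_zero]
    _ = (1 ⊗ₖ B) * ρ := by rw [← hA, add_kronecker, Matrix.add_mul, h', add_zero]

end KroneckerLemmas

theorem Matrix.trace_mul_mul_eq_star_trace_mul_mul {α k : Type*} [CommSemiring α] [StarRing α]
    [Fintype k] {M G F N ρ : Matrix k k α} (hM : M.IsHermitian) (hG : G.IsHermitian)
    (hρ : ρ.IsHermitian) (hF : F * ρ = G * ρ) (hN : N * ρ = M * ρ) :
    (M * F * ρ).trace = star (G * N * ρ).trace := by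
  rw [Matrix.mul_assoc, hF, Matrix.mul_assoc G, hN, ← trace_conjTranspose, conjTranspose_mul,
    conjTranspose_mul, hM.eq, hG.eq, hρ.eq, ← Matrix.mul_assoc, trace_mul_comm, Matrix.mul_assoc]

def EventsCoincide {ι κ X Y : Type*} (P : ι → κ → X → Y → ℝ) (x : X) (y : Y)
    (s : Finset ι) (t : Finset κ) : Prop :=
  (∀ a ∈ s, ∀ b ∉ t, P a b x y = 0) ∧ ∀ b ∈ t, ∀ a ∉ s, P a b x y = 0

structure IsQuantumRealization {𝕜 ι κ X Y m n : Type*} [RCLike 𝕜] [Fintype ι] [Fintype κ]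
    [Fintype m] [Fintype n] [DecidableEq m] [DecidableEq n]
    (ρ : Matrix (m × n) (m × n) 𝕜) (E : X → ι → Matrix m m 𝕜) (F : Y → κ → Matrix n n 𝕜)
    (P : ι → κ → X → Y → ℝ) : Prop where
  posSemidef_state : ρ.PosSemidef
  posSemidef_left : ∀ x a, (E x a).PosSemidef
  sum_left_eq_one : ∀ x, ∑ a, E x a = 1
  posSemidef_right : ∀ y b, (F y b).PosSemidef
  sum_right_eq_one : ∀ y, ∑ b, F y b = 1
  apply_eq_trace : ∀ a b x y, (P a b x y : 𝕜) = ((E x a ⊗ₖ F y b) * ρ).trace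

theorem IsQuantumBox.exists_isQuantumRealization {nA nB nX nY : ℕ}
    {P : Fin nA → Fin nB → Fin nX → Fin nY → ℝ} (hq : IsQuantumBox P) :
    ∃ (dA dB : ℕ) (ρ : Matrix (Fin dA × Fin dB) (Fin dA × Fin dB) ℂ)
      (E : Fin nX → Fin nA → Matrix (Fin dA) (Fin dA) ℂ)
      (F : Fin nY → Fin nB → Matrix (Fin dB) (Fin dB) ℂ), IsQuantumRealization ρ E F P := by
  obtain ⟨dA, dB, ρ, E, F, hρ, -, hE, hEsum, hF, hFsum, hP⟩ := hq
  refine ⟨dA, dB, ρ, E, F, hρ, hE, hEsum, hF, hFsum, fun a b x y => (hP a b x y).trans ?_⟩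
  simp only [trace, Matrix.diag, mul_apply, kroneckerMap_apply]

namespace IsQuantumRealization

variable {𝕜 ι κ X Y m n : Type*} [RCLike 𝕜] [Fintype ι] [Fintype κ] [Fintype m] [Fintype n]
  [DecidableEq m] [DecidableEq n] {ρ : Matrix (m × n) (m × n) 𝕜} {E : X → ι → Matrix m m 𝕜}
  {F : Y → κ → Matrix n n 𝕜} {P : ι → κ → X → Y → ℝ}

theorem nonneg (h : IsQuantumRealization ρ E F P) (a : ι) (b : κ) (x : X) (y : Y) :
    0 ≤ P a b x y := by
  have := h.apply_eq_trace a b x y ▸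
    ((h.posSemidef_left x a).kronecker (h.posSemidef_right y b)).trace_mul_nonneg
      h.posSemidef_state
  exact_mod_cast this

theorem sum_sum_eq_trace (h : IsQuantumRealization ρ E F P) (s : Finset ι) (t : Finset κ)
    (x : X) (y : Y) :
    ((∑ a ∈ s, ∑ b ∈ t, P a b x y : ℝ) : 𝕜) =
      (((∑ a ∈ s, E x a) ⊗ₖ ∑ b ∈ t, F y b) * ρ).trace := by
  simp only [sum_kronecker_sum, Matrix.sum_mul, trace_sum, RCLike.ofReal_sum, h.apply_eq_trace]

theorem sum_right_eq (h : IsQuantumRealization ρ E F P) (a : ι) (x : X) (y y' : Y) :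
    ∑ b, P a b x y = ∑ b, P a b x y' := by
  have key : ∀ y, ((∑ b, P a b x y : ℝ) : 𝕜) = ((E x a ⊗ₖ 1) * ρ).trace := fun y => by
    simpa [h.sum_right_eq_one y] using h.sum_sum_eq_trace {a} univ x y
  exact_mod_cast (key y).trans (key y').symm

theorem sum_left_eq (h : IsQuantumRealization ρ E F P) (b : κ) (y : Y) (x x' : X) :
    ∑ a, P a b x y = ∑ a, P a b x' y := by
  have key : ∀ x, ((∑ a, P a b x y : ℝ) : 𝕜) = ((1 ⊗ₖ F y b) * ρ).trace := fun x => by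
    simpa [h.sum_left_eq_one x] using h.sum_sum_eq_trace univ {b} x y
  exact_mod_cast (key x).trans (key x').symm

theorem nonSignallingBox {nA nB nX nY : ℕ} {E : Fin nX → Fin nA → Matrix m m 𝕜}
    {F : Fin nY → Fin nB → Matrix n n 𝕜} {P : Fin nA → Fin nB → Fin nX → Fin nY → ℝ}
    (h : IsQuantumRealization ρ E F P) : NonSignallingBox P :=
  ⟨h.sum_right_eq, fun b y x x' => h.sum_left_eq b y x x'⟩

theorem posSemidef_sum_left (h : IsQuantumRealization ρ E F P) (s : Finset ι) (x : X) :
    (∑ a ∈ s, E x a).PosSemidef :=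
  posSemidef_sum s fun a _ => h.posSemidef_left x a

theorem posSemidef_sum_right (h : IsQuantumRealization ρ E F P) (t : Finset κ) (y : Y) :
    (∑ b ∈ t, F y b).PosSemidef :=
  posSemidef_sum t fun b _ => h.posSemidef_right y b

theorem kronecker_mul_eq_zero (h : IsQuantumRealization ρ E F P) {s : Finset ι} {t : Finset κ}
    {x : X} {y : Y} (hst : ∀ a ∈ s, ∀ b ∈ t, P a b x y = 0) :
    ((∑ a ∈ s, E x a) ⊗ₖ ∑ b ∈ t, F y b) * ρ = 0 := by
  refine ((h.posSemidef_sum_left s x).kronecker (h.posSemidef_sum_right t y))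
    |>.mul_eq_zero_of_trace_mul_eq_zero h.posSemidef_state ?_
  rw [← h.sum_sum_eq_trace, sum_eq_zero fun a ha => sum_eq_zero fun b hb => hst a ha b hb,
    RCLike.ofReal_zero]

theorem kronecker_one_mul_eq (h : IsQuantumRealization ρ E F P) {s : Finset ι} {t : Finset κ}
    {x : X} {y : Y} (hst : EventsCoincide P x y s t) :
    ((∑ a ∈ s, E x a) ⊗ₖ 1) * ρ = (1 ⊗ₖ ∑ b ∈ t, F y b) * ρ :=
  kronecker_one_mul_eq_one_kronecker_mul (A' := ∑ a ∈ sᶜ, E x a) (B' := ∑ b ∈ tᶜ, F y b)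
    (by rw [sum_add_sum_compl, h.sum_left_eq_one]) (by rw [sum_add_sum_compl, h.sum_right_eq_one])
    (h.kronecker_mul_eq_zero fun a ha b hb => hst.1 a ha b (mem_compl.1 hb))
    (h.kronecker_mul_eq_zero fun a ha b hb => hst.2 b hb a (mem_compl.1 ha))

theorem sum_sum_eq_sum_sum (h : IsQuantumRealization ρ E F P) {x₀ x₁ : X} {y₀ y₁ : Y}
    {s s' : Finset ι} {t t' : Finset κ} (h₀ : EventsCoincide P x₀ y₀ s t)
    (h₁ : EventsCoincide P x₁ y₁ s' t') :
    ∑ a ∈ s, ∑ b ∈ t', P a b x₀ y₁ = ∑ a ∈ s', ∑ b ∈ t, P a b x₁ y₀ := by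
  have key := trace_mul_mul_eq_star_trace_mul_mul
    ((h.posSemidef_sum_left s x₀).kronecker PosSemidef.one).isHermitian
    ((h.posSemidef_sum_left s' x₁).kronecker PosSemidef.one).isHermitian
    h.posSemidef_state.isHermitian (h.kronecker_one_mul_eq h₁).symm
    (h.kronecker_one_mul_eq h₀).symm
  rw [← mul_kronecker_mul, ← mul_kronecker_mul, Matrix.mul_one, Matrix.one_mul, Matrix.mul_one,
    Matrix.one_mul, ← h.sum_sum_eq_trace, ← h.sum_sum_eq_trace, RCLike.star_def,
    RCLike.conj_ofReal] at key
  exact_mod_cast key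

end IsQuantumRealization

section ConditionalProbability

variable {ι κ : Type*}

theorem eq_zero_of_sum_div_sum_eq_one [Fintype ι] {f : ι → ℝ} (hf : ∀ i, 0 ≤ f i) {s : Finset ι}
    (h : (∑ i ∈ s, f i) / ∑ i, f i = 1) {i : ι} (hi : i ∉ s) : f i = 0 := by
  have hne : ∑ i, f i ≠ 0 := fun h0 => by simp [h0] at h
  have hcompl : ∑ i ∈ sᶜ, f i = 0 := by
    have := sum_add_sum_compl s f
    rw [div_eq_one_iff_eq hne] at h
    linarith
  exact (sum_eq_zero_iff_of_nonneg fun i _ => hf i).1 hcompl i (mem_compl.2 hi)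

-- Where the denominator vanishes, so does `f j`, so the junk value `0 / 0 = 0` is harmless.
theorem eq_mul_sum_of_div_sum_eq [Fintype ι] {f : ι → ℝ} (hf : ∀ i, 0 ≤ f i) {j : ι} {q : ℝ}
    (h : f j / ∑ i, f i = q) : f j = q * ∑ i, f i := by
  rcases eq_or_ne (∑ i, f i) 0 with h0 | h0
  · rw [h0, mul_zero]
    exact (sum_eq_zero_iff_of_nonneg fun i _ => hf i).1 h0 j (mem_univ j)
  · rw [← h, div_mul_cancel₀ _ h0]

theorem sum_apply_eq_mul_sum_sum [Fintype κ] {p p' : ι → κ → ℝ} {s : Finset ι} {t : Finset κ}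
    {k : κ} {q : ℝ} (hmarg : ∀ i ∈ s, ∑ j, p i j = ∑ j, p' i j)
    (hcond : ∀ i ∈ s, p i k = q * ∑ j, p i j) (hcert : ∀ i ∈ s, ∀ j ∉ t, p' i j = 0) :
    ∑ i ∈ s, p i k = q * ∑ i ∈ s, ∑ j ∈ t, p' i j := by
  rw [mul_sum]
  refine sum_congr rfl fun i hi => ?_
  rw [hcond i hi, hmarg i hi,
    sum_subset (subset_univ t) fun j _ hj => hcert i hi j hj]

end ConditionalProbability

section CCDSets

variable {nA nB nX nY : ℕ} {P : Fin nA → Fin nB → Fin nX → Fin nY → ℝ} {x0 x1 : Fin nX}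
  {y0 y1 : Fin nY} {a1 : Fin nA} {b1 : Fin nB} {qA qB : ℝ}

theorem antitone_ccdSets : Antitone (ccdSets P x0 x1 y0 y1 a1 b1 qA qB) :=
  antitone_nat_of_succ_le fun _ => Prod.mk_le_mk.2 ⟨filter_subset _ _, filter_subset _ _⟩

variable (P x0 x1 y0 y1 a1 b1 qA qB) in
theorem exists_ccdSets_succ_eq :
    ∃ N, ccdSets P x0 x1 y0 y1 a1 b1 qA qB (N + 1) = ccdSets P x0 x1 y0 y1 a1 b1 qA qB N := by
  obtain ⟨N, hN⟩ := WellFoundedLT.antitone_chain_condition antitone_ccdSets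
  exact ⟨N, (hN (N + 1) N.le_succ).symm⟩

theorem eventsCoincide_of_ccdSets_succ_eq (hP : ∀ a b, 0 ≤ P a b x0 y0) {N : ℕ}
    (hN : ccdSets P x0 x1 y0 y1 a1 b1 qA qB (N + 1) = ccdSets P x0 x1 y0 y1 a1 b1 qA qB N) :
    EventsCoincide P x0 y0 (ccdSets P x0 x1 y0 y1 a1 b1 qA qB N).1
      (ccdSets P x0 x1 y0 y1 a1 b1 qA qB N).2 := by
  constructor
  · intro a ha b hb
    rw [← hN, ccdSets, mem_filter] at ha
    exact eq_zero_of_sum_div_sum_eq_one (hP a) ha.2 hb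
  · intro b hb a ha
    rw [← hN, ccdSets, mem_filter] at hb
    exact eq_zero_of_sum_div_sum_eq_one (hP · b) hb.2 ha

theorem apply_eq_mul_sum_of_mem_ccdSets_fst (hP : ∀ a b, 0 ≤ P a b x0 y1) {n : ℕ} {a : Fin nA}
    (ha : a ∈ (ccdSets P x0 x1 y0 y1 a1 b1 qA qB n).1) : P a b1 x0 y1 = qA * ∑ b, P a b x0 y1 := by
  have ha0 := antitone_ccdSets (Nat.zero_le n) |>.1 ha
  rw [ccdSets, mem_filter] at ha0
  exact eq_mul_sum_of_div_sum_eq (hP a) ha0.2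

theorem apply_eq_mul_sum_of_mem_ccdSets_snd (hP : ∀ a b, 0 ≤ P a b x1 y0) {n : ℕ} {b : Fin nB}
    (hb : b ∈ (ccdSets P x0 x1 y0 y1 a1 b1 qA qB n).2) : P a1 b x1 y0 = qB * ∑ a, P a b x1 y0 := by
  have hb0 := antitone_ccdSets (Nat.zero_le n) |>.2 hb
  rw [ccdSets, mem_filter] at hb0
  exact eq_mul_sum_of_div_sum_eq (hP · b) hb0.2

theorem sum_fst_ccdSets_eq_mul (hP : ∀ a b x y, 0 ≤ P a b x y) (hns : NonSignallingBox P)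
    {N : ℕ}
    (hN : ccdSets P x0 x1 y0 y1 a1 b1 qA qB (N + 1) = ccdSets P x0 x1 y0 y1 a1 b1 qA qB N) :
    ∑ a ∈ (ccdSets P x0 x1 y0 y1 a1 b1 qA qB N).1, P a b1 x0 y1 =
      qA * ∑ a ∈ (ccdSets P x0 x1 y0 y1 a1 b1 qA qB N).1,
        ∑ b ∈ (ccdSets P x0 x1 y0 y1 a1 b1 qA qB N).2, P a b x0 y0 :=
  sum_apply_eq_mul_sum_sum (fun a _ => hns.1 a x0 y1 y0)
    (fun _ ha => apply_eq_mul_sum_of_mem_ccdSets_fst (fun a b => hP a b _ _) ha)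
    (eventsCoincide_of_ccdSets_succ_eq (fun a b => hP a b _ _) hN).1

theorem sum_snd_ccdSets_eq_mul (hP : ∀ a b x y, 0 ≤ P a b x y) (hns : NonSignallingBox P)
    {N : ℕ}
    (hN : ccdSets P x0 x1 y0 y1 a1 b1 qA qB (N + 1) = ccdSets P x0 x1 y0 y1 a1 b1 qA qB N) :
    ∑ b ∈ (ccdSets P x0 x1 y0 y1 a1 b1 qA qB N).2, P a1 b x1 y0 =
      qB * ∑ a ∈ (ccdSets P x0 x1 y0 y1 a1 b1 qA qB N).1,
        ∑ b ∈ (ccdSets P x0 x1 y0 y1 a1 b1 qA qB N).2, P a b x0 y0 := by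
  rw [sum_comm]
  exact sum_apply_eq_mul_sum_sum (fun b _ => hns.2 b y0 x1 x0)
    (fun _ hb => apply_eq_mul_sum_of_mem_ccdSets_snd (fun a b => hP a b _ _) hb)
    (eventsCoincide_of_ccdSets_succ_eq (fun a b => hP a b _ _) hN).2

end CCDSets

theorem eventsCoincide_singleton_of_perfectCorrelation {nA nB nX nY : ℕ}
    {P : Fin nA → Fin nB → Fin nX → Fin nY → ℝ} {x : Fin nX} {y : Fin nY}
    (hP : ∀ (a : Fin nA) (b : Fin nB), (a : ℕ) ≠ (b : ℕ) → P a b x y = 0) {a : Fin nA}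
    {b : Fin nB} (hab : (a : ℕ) = b) : EventsCoincide P x y {a} {b} := by
  refine ⟨fun a' ha' b' hb' => hP a' b' ?_, fun b' hb' a' ha' => hP a' b' ?_⟩
  · rw [mem_singleton.1 ha', hab]
    exact fun h => hb' (mem_singleton.2 (Fin.ext h.symm))
  · rw [mem_singleton.1 hb', ← hab]
    exact fun h => ha' (mem_singleton.2 (Fin.ext h))

/-- **Observers of quantum systems cannot agree to disagree.** No quantum box, with
arbitrary finite input and output sets containing `{0,1}`, can exhibit common certainty
of disagreement. -/
theorem quantum_no_common_certainty_of_disagreement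
    {nA nB nX nY : ℕ} (hA : 2 ≤ nA) (hB : 2 ≤ nB) (hX : 2 ≤ nX) (hY : 2 ≤ nY)
    (P : Fin nA → Fin nB → Fin nX → Fin nY → ℝ)
    (hq : IsQuantumBox P) :
    ¬ HasCCD hA hB hX hY P := by
  rintro ⟨hcorr, hpos, qA, qB, -, -, hne, hmem⟩
  obtain ⟨dA, dB, ρ, E, F, hQ⟩ := hq.exists_isQuantumRealization
  obtain ⟨N, hN⟩ := exists_ccdSets_succ_eq P ⟨0, by omega⟩ ⟨1, hX⟩ ⟨0, by omega⟩ ⟨1, hY⟩ ⟨1, hA⟩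
    ⟨1, hB⟩ qA qB
  have hS := eventsCoincide_of_ccdSets_succ_eq (fun a b => hQ.nonneg a b _ _) hN
  have hw : 0 < ∑ a ∈ (ccdSets P _ _ _ _ _ _ qA qB N).1,
      ∑ b ∈ (ccdSets P _ _ _ _ _ _ qA qB N).2, P a b ⟨0, by omega⟩ ⟨0, by omega⟩ :=
    sum_pos' (fun a _ => sum_nonneg fun b _ => hQ.nonneg a b _ _)
      ⟨_, (hmem N).1, sum_pos' (fun b _ => hQ.nonneg _ b _ _) ⟨_, (hmem N).2, hpos⟩⟩
  have hagree := hQ.sum_sum_eq_sum_sum hS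
    (eventsCoincide_singleton_of_perfectCorrelation hcorr (a := ⟨1, hA⟩) (b := ⟨1, hB⟩) rfl)
  rw [sum_congr rfl fun a _ => sum_singleton _ _, sum_singleton,
    sum_fst_ccdSets_eq_mul hQ.nonneg hQ.nonSignallingBox hN,
    sum_snd_ccdSets_eq_mul hQ.nonneg hQ.nonSignallingBox hN] at hagree
  exact hne (mul_right_cancel₀ hw.ne' hagree)
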